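/- Let N > 2 and p, q ∈ (0,1) with p > q. Then the misclassification proportion e(p,q) = Φ(-μ₁/σ₁), with μ₁ = 1 - p + (N/2)(p-q) and σ₁ = sqrt(1 - p + (N/2)(p+q)), is strictly monotonically decreasing in p and strictly monotonically increasing in q. -/
import Mathlib


open ProbabilityTheory

/-- The standard normal CDF `Φ`. -/
noncomputable def stdNormalCDF (t : ℝ) : ℝ :=
  ((gaussianReal 0 1) (Set.Iic t)).toReal

/-- The misclassification proportion `e(p,q) = Φ(-μ₁/σ₁)` with
`μ₁ = 1 - p + (N/2)(p-q)` and `σ₁ = sqrt(1 - p + (N/2)(p+q))`. -/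
noncomputable def misclasRate (N p q : ℝ) : ℝ :=
  stdNormalCDF (-(1 - p + N / 2 * (p - q)) / Real.sqrt (1 - p + N / 2 * (p + q)))

lemma stdNormalCDF_strictMono : StrictMono stdNormalCDF := by
  intro a b hab
  have hmeas : (gaussianReal 0 1) (Set.Iic b)
      = (gaussianReal 0 1) (Set.Iic a) + (gaussianReal 0 1) (Set.Ioc a b) := by
    rw [← Set.Iic_union_Ioc_eq_Iic hab.le,
      MeasureTheory.measure_union (Set.Iic_disjoint_Ioc le_rfl) measurableSet_Ioc]
  have hpos : 0 < (gaussianReal 0 1) (Set.Ioc a b) := by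
    rw [pos_iff_ne_zero]
    intro h
    have := (gaussianReal_absolutelyContinuous' 0 (by norm_num)) h
    rw [Real.volume_Ioc] at this
    simp [ENNReal.ofReal_eq_zero, hab] at this
    linarith
  have hfin : (gaussianReal 0 1) (Set.Iic a) ≠ ⊤ := MeasureTheory.measure_ne_top _ _
  have hfin2 : (gaussianReal 0 1) (Set.Ioc a b) ≠ ⊤ := MeasureTheory.measure_ne_top _ _
  unfold stdNormalCDF
  rw [hmeas, ENNReal.toReal_add hfin hfin2]
  have := ENNReal.toReal_pos hpos.ne' hfin2
  linarith

lemma neg_div_sqrt_lt (μ₁ μ₂ s₁ s₂ : ℝ) (hμ₁ : 0 < μ₁) (hμ₂ : 0 < μ₂)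
    (hs₁ : 0 < s₁) (hs₂ : 0 < s₂) (h : μ₁ ^ 2 * s₂ < μ₂ ^ 2 * s₁) :
    -μ₂ / Real.sqrt s₂ < -μ₁ / Real.sqrt s₁ := by
  have h1 : Real.sqrt (μ₁ ^ 2 * s₂) < Real.sqrt (μ₂ ^ 2 * s₁) :=
    Real.sqrt_lt_sqrt (by positivity) h
  rw [Real.sqrt_mul (by positivity), Real.sqrt_mul (by positivity),
    Real.sqrt_sq hμ₁.le, Real.sqrt_sq hμ₂.le] at h1
  have hq1 : 0 < Real.sqrt s₁ := Real.sqrt_pos.mpr hs₁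
  have hq2 : 0 < Real.sqrt s₂ := Real.sqrt_pos.mpr hs₂
  rw [div_lt_div_iff₀ hq2 hq1]
  nlinarith

lemma polyP (m₁ m₂ c : ℝ) (hc : 0 < c) (h1 : c < m₁) (h2 : m₁ < m₂) :
    (m₁ - c) ^ 2 * (m₂ + c) < (m₂ - c) ^ 2 * (m₁ + c) := by
  nlinarith [mul_pos (sub_pos.mpr h2) (mul_pos (sub_pos.mpr h1) hc),
    mul_pos (sub_pos.mpr h2) (mul_pos (sub_pos.mpr h1) (sub_pos.mpr (h1.trans h2))),
    mul_pos (sub_pos.mpr h2) (mul_pos hc hc)]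

lemma polyQ (m c₁ c₂ : ℝ) (hc : 0 < c₁) (h1 : c₂ < m) (h2 : c₁ < c₂) :
    (m - c₂) ^ 2 * (m + c₁) < (m - c₁) ^ 2 * (m + c₂) := by
  nlinarith [mul_pos (sub_pos.mpr h2) (sub_pos.mpr h1), mul_pos hc (sub_pos.mpr h2),
    mul_pos (sub_pos.mpr h2) (mul_pos (sub_pos.mpr h1) (sub_pos.mpr h1))]

/-- For `N > 2` and `p, q ∈ (0,1)` with `p > q`, the
misclassification proportion `e(p,q) = Φ(-μ₁/σ₁)` is strictly decreasing in `p`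
and strictly increasing in `q`. -/
theorem misclasRate_monotone (N : ℝ) (hN : 2 < N) :
    (∀ p₁ p₂ q : ℝ, p₁ ∈ Set.Ioo (0 : ℝ) 1 → p₂ ∈ Set.Ioo (0 : ℝ) 1 →
      q ∈ Set.Ioo (0 : ℝ) 1 → q < p₁ → q < p₂ → p₁ < p₂ →
      misclasRate N p₂ q < misclasRate N p₁ q) ∧
    (∀ p q₁ q₂ : ℝ, p ∈ Set.Ioo (0 : ℝ) 1 → q₁ ∈ Set.Ioo (0 : ℝ) 1 →
      q₂ ∈ Set.Ioo (0 : ℝ) 1 → q₁ < p → q₂ < p → q₁ < q₂ →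
      misclasRate N p q₁ < misclasRate N p q₂) := by
  have hN2 : (0:ℝ) < N / 2 := by linarith
  constructor
  · rintro p₁ p₂ q ⟨hp₁0, hp₁1⟩ ⟨hp₂0, hp₂1⟩ ⟨hq0, hq1⟩ hqp₁ hqp₂ hpp
    unfold misclasRate
    apply stdNormalCDF_strictMono
    have hμ₁ : (0:ℝ) < 1 - p₁ + N / 2 * (p₁ - q) := by nlinarith
    have hμ₂ : (0:ℝ) < 1 - p₂ + N / 2 * (p₂ - q) := by nlinarith
    have hs₁ : (0:ℝ) < 1 - p₁ + N / 2 * (p₁ + q) := by nlinarith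
    have hs₂ : (0:ℝ) < 1 - p₂ + N / 2 * (p₂ + q) := by nlinarith
    have hpoly := polyP (1 + (N / 2 - 1) * p₁) (1 + (N / 2 - 1) * p₂) (N / 2 * q)
      (by positivity) (by nlinarith) (by nlinarith)
    exact neg_div_sqrt_lt _ _ _ _ hμ₁ hμ₂ hs₁ hs₂ (by nlinarith [hpoly])
  · rintro p q₁ q₂ ⟨hp0, hp1⟩ ⟨hq₁0, hq₁1⟩ ⟨hq₂0, hq₂1⟩ hq₁p hq₂p hqq
    unfold misclasRate
    apply stdNormalCDF_strictMono
    have hμ₁ : (0:ℝ) < 1 - p + N / 2 * (p - q₂) := by nlinarith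
    have hμ₂ : (0:ℝ) < 1 - p + N / 2 * (p - q₁) := by nlinarith
    have hs₁ : (0:ℝ) < 1 - p + N / 2 * (p + q₂) := by nlinarith
    have hs₂ : (0:ℝ) < 1 - p + N / 2 * (p + q₁) := by nlinarith
    have hpoly := polyQ (1 + (N / 2 - 1) * p) (N / 2 * q₁) (N / 2 * q₂)
      (by positivity) (by nlinarith) (by nlinarith)
    refine neg_div_sqrt_lt _ _ _ _ hμ₁ hμ₂ hs₁ hs₂ ?_
    have e1 : 1 - p + N / 2 * (p - q₂) = (1 + (N / 2 - 1) * p) - N / 2 * q₂ := by ring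
    have e2 : 1 - p + N / 2 * (p - q₁) = (1 + (N / 2 - 1) * p) - N / 2 * q₁ := by ring
    have e3 : 1 - p + N / 2 * (p + q₁) = (1 + (N / 2 - 1) * p) + N / 2 * q₁ := by ring
    have e4 : 1 - p + N / 2 * (p + q₂) = (1 + (N / 2 - 1) * p) + N / 2 * q₂ := by ring
    rw [e1, e2, e3, e4]
    exact hpoly
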